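/- arXiv:1706.00534 — 6 statements merged into one kernel-verified Lean document; each statement's English description precedes it below -/
import Mathlib

section
/- Assume conditions (B) and (C) hold, that L_{i+1} = [L_i, L_1] for all i > 0, and that there exists a Lie subalgebra S of L that is simple as a Lie algebra, is graded in the sense that S = ⊕_i (S ∩ L_i), and satisfies S ∩ L_i = L_i for all i ≠ 0, with L_1 ≠ 0. Then the annihilator of L_1 in L_0 is zero: the only x ∈ L_0 with [x, L_1] = 0 is x = 0. (Lemma 2.14.) -/
/- Graded Lie algebra setting: `F` a field of characteristic 3, `A` a
finite-dimensional Lie algebra over `F`, with a `ℤ`-grading `L : ℤ → Submodule F A`. -/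

namespace GradedLie

variable {F A : Type*} [Field F] [CharP F 3] [LieRing A] [LieAlgebra F A]

/-- The linear span of all brackets `⁅u, v⁆` with `u ∈ U`, `v ∈ V`. -/
def bSpan (U V : Submodule F A) : Submodule F A :=
  Submodule.span F {z | ∃ u ∈ U, ∃ v ∈ V, z = ⁅u, v⁆}

/-- `M` is an irreducible `L0`-module under the adjoint action:
`M ≠ 0` and the only `L0`-submodules of `M` are `0` and `M`. -/
def IsIrred (L0 M : Submodule F A) : Prop :=
  M ≠ ⊥ ∧ ∀ V ≤ M, bSpan L0 V ≤ V → V = ⊥ ∨ V = M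

end GradedLie

/-!
Let `Ann` be the annihilator of `L 1` in `L 0`. It is `L 0`-stable, so `[Ann, L₋₁]` is an
`L 0`-submodule of `L₋₁`, and by irreducibility it is `0` or `L₋₁`. If it is `0`, transitivity
gives `Ann = 0`. If it is `L₋₁`, the Jacobi identity puts `[L₋₁, L 1]` inside `Ann`; then
`[L 2, L₋₁] = 0`, so `L 2 = 0` and `L` vanishes in all degrees `≥ 2`. Now
`[L₋₁, L 1] ⊕ ⨁_{j < 0} L j` is an ideal of `L` lying in `S`, containing `L₋q ≠ 0` but not
`L 1 ≠ 0`, contradicting the simplicity of `S`.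
-/

namespace GradedLie

variable {F A : Type*} [Field F] [LieRing A] [LieAlgebra F A]

section bSpan

variable {U U' V V' W Z : Submodule F A}

theorem bSpan_eq_map₂ (U V : Submodule F A) :
    bSpan U V = Submodule.map₂ (LieModule.toEnd F A A : A →ₗ[F] Module.End F A) U V := by
  rw [Submodule.map₂_eq_span_image2, bSpan]
  congr 1
  ext z
  simp [Set.mem_image2, eq_comm]

theorem bSpan_le_iff : bSpan U V ≤ W ↔ ∀ u ∈ U, ∀ v ∈ V, ⁅u, v⁆ ∈ W := by
  simp [bSpan_eq_map₂, Submodule.map₂_le]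

theorem lie_mem_bSpan {u v : A} (hu : u ∈ U) (hv : v ∈ V) : ⁅u, v⁆ ∈ bSpan U V :=
  bSpan_le_iff.1 le_rfl u hu v hv

@[gcongr]
theorem bSpan_mono (hU : U ≤ U') (hV : V ≤ V') : bSpan U V ≤ bSpan U' V' := by
  simpa only [bSpan_eq_map₂] using Submodule.map₂_le_map₂ hU hV

@[simp]
theorem bSpan_bot_left (V : Submodule F A) : bSpan ⊥ V = ⊥ := by
  simp [bSpan_eq_map₂]

theorem bSpan_sup_right (U V V' : Submodule F A) :
    bSpan U (V ⊔ V') = bSpan U V ⊔ bSpan U V' := by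
  simp only [bSpan_eq_map₂, Submodule.map₂_sup_right]

theorem bSpan_iSup_left {ι : Sort*} (U : ι → Submodule F A) (V : Submodule F A) :
    bSpan (⨆ i, U i) V = ⨆ i, bSpan (U i) V := by
  simp only [bSpan_eq_map₂, Submodule.map₂_iSup_left]

theorem bSpan_iSup_right {ι : Sort*} (U : Submodule F A) (V : ι → Submodule F A) :
    bSpan U (⨆ i, V i) = ⨆ i, bSpan U (V i) := by
  simp only [bSpan_eq_map₂, Submodule.map₂_iSup_right]

theorem bSpan_comm (U V : Submodule F A) : bSpan U V = bSpan V U := by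
  refine le_antisymm (bSpan_le_iff.2 fun u hu v hv => ?_) (bSpan_le_iff.2 fun v hv u hu => ?_) <;>
    · rw [← lie_skew]
      exact neg_mem (lie_mem_bSpan ‹_› ‹_›)

theorem bSpan_bSpan_le (Z U V : Submodule F A) :
    bSpan Z (bSpan U V) ≤ bSpan (bSpan Z U) V ⊔ bSpan U (bSpan Z V) := by
  refine bSpan_le_iff.2 fun z hz x hx => ?_
  have : bSpan U V ≤ (bSpan (bSpan Z U) V ⊔ bSpan U (bSpan Z V)).comap
      (LieModule.toEnd F A A z : Module.End F A) := bSpan_le_iff.2 fun u hu v hv => by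
    rw [Submodule.mem_comap, LieModule.toEnd_apply_apply, leibniz_lie]
    exact Submodule.add_mem_sup (lie_mem_bSpan (lie_mem_bSpan hz hu) hv)
      (lie_mem_bSpan hu (lie_mem_bSpan hz hv))
  simpa only [Submodule.mem_comap, LieModule.toEnd_apply_apply] using this hx

theorem bSpan_bSpan_le_self (hU : bSpan Z U ≤ U) (hV : bSpan Z V ≤ V) :
    bSpan Z (bSpan U V) ≤ bSpan U V :=
  (bSpan_bSpan_le Z U V).trans (sup_le (bSpan_mono hU le_rfl) (bSpan_mono le_rfl hV))

end bSpan

section annihilator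

def annihilator (U V : Submodule F A) : Submodule F A where
  carrier := {x | x ∈ U ∧ ∀ y ∈ V, ⁅x, y⁆ = 0}
  add_mem' ha hb :=
    ⟨add_mem ha.1 hb.1, fun y hy => by rw [add_lie, ha.2 y hy, hb.2 y hy, add_zero]⟩
  zero_mem' := ⟨zero_mem U, fun y _ => zero_lie y⟩
  smul_mem' c _ ha := ⟨U.smul_mem c ha.1, fun y hy => by rw [smul_lie, ha.2 y hy, smul_zero]⟩

variable {U V Z : Submodule F A}

theorem mem_annihilator {x : A} : x ∈ annihilator U V ↔ x ∈ U ∧ ∀ y ∈ V, ⁅x, y⁆ = 0 :=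
  Iff.rfl

theorem annihilator_le : annihilator U V ≤ U := fun _ hx => hx.1

@[simp]
theorem bSpan_annihilator_eq_bot : bSpan (annihilator U V) V = ⊥ :=
  eq_bot_iff.2 <| bSpan_le_iff.2 fun _ hx y hy => (Submodule.mem_bot F).2 (hx.2 y hy)

theorem bSpan_annihilator_le_self (hU : bSpan Z U ≤ U) (hV : bSpan Z V ≤ V) :
    bSpan Z (annihilator U V) ≤ annihilator U V := by
  refine bSpan_le_iff.2 fun z hz a ha => ⟨hU (lie_mem_bSpan hz ha.1), fun y hy => ?_⟩
  rw [lie_lie, ha.2 y hy, lie_zero, zero_sub, ha.2 _ (hV (lie_mem_bSpan hz hy)), neg_zero]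

end annihilator

section graded

variable {L : ℤ → Submodule F A}

theorem bSpan_le_of_add_eq (hgrade : ∀ i j, bSpan (L i) (L j) ≤ L (i + j)) {i j k : ℤ}
    (h : i + j = k) : bSpan (L i) (L j) ≤ L k :=
  h ▸ hgrade i j

theorem bSpan_zero_annihilator_le (hgrade : ∀ i j, bSpan (L i) (L j) ≤ L (i + j)) :
    bSpan (L 0) (annihilator (L 0) (L 1)) ≤ annihilator (L 0) (L 1) :=
  bSpan_annihilator_le_self (bSpan_le_of_add_eq hgrade (zero_add 0))
    (bSpan_le_of_add_eq hgrade (zero_add 1))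

theorem eq_bot_of_bSpan_neg_one_eq_bot
    (hC : ∀ j : ℤ, 0 ≤ j → ∀ x ∈ L j, (∀ y ∈ L (-1), ⁅x, y⁆ = 0) → x = 0)
    {j : ℤ} (hj : 0 ≤ j) {X : Submodule F A} (hX : X ≤ L j) (h : bSpan X (L (-1)) = ⊥) :
    X = ⊥ :=
  eq_bot_iff.2 fun x hx => (Submodule.mem_bot F).2 <| hC j hj x (hX hx) fun _ hy =>
    (Submodule.mem_bot F).1 (h ▸ lie_mem_bSpan hx hy)

theorem bSpan_annihilator_neg_one_eq_bot_or_eq (hgrade : ∀ i j, bSpan (L i) (L j) ≤ L (i + j))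
    (hB : IsIrred (L 0) (L (-1))) :
    bSpan (annihilator (L 0) (L 1)) (L (-1)) = ⊥ ∨
      bSpan (annihilator (L 0) (L 1)) (L (-1)) = L (-1) :=
  hB.2 _ ((bSpan_mono annihilator_le le_rfl).trans (bSpan_le_of_add_eq hgrade (zero_add _)))
    (bSpan_bSpan_le_self (bSpan_zero_annihilator_le hgrade)
      (bSpan_le_of_add_eq hgrade (zero_add _)))

theorem bSpan_neg_one_one_le_annihilator (hgrade : ∀ i j, bSpan (L i) (L j) ≤ L (i + j))
    (h : bSpan (annihilator (L 0) (L 1)) (L (-1)) = L (-1)) :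
    bSpan (L (-1)) (L 1) ≤ annihilator (L 0) (L 1) := by
  set Ann := annihilator (L 0) (L 1)
  calc bSpan (L (-1)) (L 1)
      = bSpan (L 1) (bSpan Ann (L (-1))) := by rw [h, bSpan_comm]
    _ ≤ bSpan (bSpan (L 1) Ann) (L (-1)) ⊔ bSpan Ann (bSpan (L 1) (L (-1))) :=
      bSpan_bSpan_le _ _ _
    _ = bSpan (bSpan (L 1) (L (-1))) Ann := by
      rw [bSpan_comm (L 1) Ann, bSpan_annihilator_eq_bot, bSpan_bot_left, bot_sup_eq,
        bSpan_comm]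
    _ ≤ bSpan (L 0) Ann := bSpan_mono (bSpan_le_of_add_eq hgrade (add_neg_cancel 1)) le_rfl
    _ ≤ Ann := bSpan_zero_annihilator_le hgrade

theorem component_two_eq_bot (hC : ∀ j : ℤ, 0 ≤ j → ∀ x ∈ L j, (∀ y ∈ L (-1), ⁅x, y⁆ = 0) → x = 0)
    (hL2 : L 2 = bSpan (L 1) (L 1)) (hT : bSpan (L (-1)) (L 1) ≤ annihilator (L 0) (L 1)) :
    L 2 = ⊥ := by
  refine eq_bot_of_bSpan_neg_one_eq_bot hC zero_le_two le_rfl (eq_bot_iff.2 ?_)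
  calc bSpan (L 2) (L (-1))
      = bSpan (L (-1)) (bSpan (L 1) (L 1)) := by rw [hL2, bSpan_comm]
    _ ≤ bSpan (bSpan (L (-1)) (L 1)) (L 1) ⊔ bSpan (L 1) (bSpan (L (-1)) (L 1)) :=
      bSpan_bSpan_le _ _ _
    _ ≤ bSpan (annihilator (L 0) (L 1)) (L 1) ⊔ bSpan (L 1) (annihilator (L 0) (L 1)) := by
      gcongr
    _ = ⊥ := by rw [bSpan_comm (L 1), bSpan_annihilator_eq_bot, sup_bot_eq]

theorem component_eq_bot_of_two_le (hgen : ∀ i : ℤ, 0 < i → L (i + 1) = bSpan (L i) (L 1))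
    (h2 : L 2 = ⊥) {j : ℤ} (hj : 2 ≤ j) : L j = ⊥ := by
  induction j, hj using Int.leInduction with
  | base => exact h2
  | succ n hn ih => rw [hgen n (by omega), ih, bSpan_bot_left]

def negPart (L : ℤ → Submodule F A) : Submodule F A :=
  ⨆ (j : ℤ) (_ : j < 0), L j

def lowerIdeal (L : ℤ → Submodule F A) : Submodule F A :=
  bSpan (L (-1)) (L 1) ⊔ negPart L

theorem le_negPart {j : ℤ} (hj : j < 0) : L j ≤ negPart L :=
  le_iSup₂_of_le j hj le_rfl

theorem bSpan_le_negPart (hgrade : ∀ i j, bSpan (L i) (L j) ≤ L (i + j)) {i j : ℤ}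
    (h : i + j < 0) : bSpan (L i) (L j) ≤ negPart L :=
  (hgrade i j).trans (le_negPart h)

theorem bSpan_bSpan_neg_one_one_le_lowerIdeal (hgrade : ∀ i j, bSpan (L i) (L j) ≤ L (i + j))
    (hT : bSpan (L (-1)) (L 1) ≤ annihilator (L 0) (L 1)) (hL : ∀ j, 2 ≤ j → L j = ⊥) (i : ℤ) :
    bSpan (L i) (bSpan (L (-1)) (L 1)) ≤ lowerIdeal L := by
  rcases lt_trichotomy i 0 with hi | rfl | hi
  · calc bSpan (L i) (bSpan (L (-1)) (L 1)) ≤ bSpan (L i) (L 0) :=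
          bSpan_mono le_rfl (bSpan_le_of_add_eq hgrade (neg_add_cancel 1))
      _ ≤ lowerIdeal L := (bSpan_le_negPart hgrade (by omega)).trans le_sup_right
  · refine le_sup_of_le_left (bSpan_bSpan_le_self ?_ ?_) <;>
      exact bSpan_le_of_add_eq hgrade (zero_add _)
  · rcases (show i = 1 ∨ 2 ≤ i by omega) with rfl | hi
    · calc bSpan (L 1) (bSpan (L (-1)) (L 1)) ≤ bSpan (L 1) (annihilator (L 0) (L 1)) :=
            bSpan_mono le_rfl hT
        _ = ⊥ := by rw [bSpan_comm, bSpan_annihilator_eq_bot]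
        _ ≤ lowerIdeal L := bot_le
    · simp [hL i hi]

theorem bSpan_negPart_le_lowerIdeal (hgrade : ∀ i j, bSpan (L i) (L j) ≤ L (i + j))
    (hL : ∀ j, 2 ≤ j → L j = ⊥) (i : ℤ) : bSpan (L i) (negPart L) ≤ lowerIdeal L := by
  simp only [negPart, bSpan_iSup_right, iSup_le_iff]
  intro j hj
  rcases lt_or_ge (i + j) 0 with hij | hij
  · exact (bSpan_le_negPart hgrade hij).trans le_sup_right
  · rcases (show i = 1 ∧ j = -1 ∨ 2 ≤ i by omega) with ⟨rfl, rfl⟩ | hi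
    · exact le_sup_of_le_left (bSpan_comm _ _).le
    · simp [hL i hi]

theorem bSpan_lowerIdeal_le (hgrade : ∀ i j, bSpan (L i) (L j) ≤ L (i + j))
    (hT : bSpan (L (-1)) (L 1) ≤ annihilator (L 0) (L 1)) (hL : ∀ j, 2 ≤ j → L j = ⊥) (i : ℤ) :
    bSpan (L i) (lowerIdeal L) ≤ lowerIdeal L := by
  rw [lowerIdeal, bSpan_sup_right]
  exact sup_le (bSpan_bSpan_neg_one_one_le_lowerIdeal hgrade hT hL i)
    (bSpan_negPart_le_lowerIdeal hgrade hL i)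

theorem lowerIdeal_le {X : Submodule F A} (hLX : ∀ i, i ≠ 0 → L i ≤ X) (hX : bSpan X X ≤ X) :
    lowerIdeal L ≤ X :=
  sup_le ((bSpan_mono (hLX _ (by norm_num)) (hLX _ one_ne_zero)).trans hX)
    (iSup₂_le fun j hj => hLX j hj.ne)

theorem lowerIdeal_le_iSup_ne_one (hgrade : ∀ i j, bSpan (L i) (L j) ≤ L (i + j)) :
    lowerIdeal L ≤ ⨆ (j : ℤ) (_ : j ≠ 1), L j :=
  sup_le
    ((bSpan_le_of_add_eq hgrade (neg_add_cancel 1)).trans (le_iSup₂_of_le 0 zero_ne_one le_rfl))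
    (iSup₂_mono' fun j hj => ⟨j, by omega, le_rfl⟩)

end graded

theorem eq_bot_or_le_of_bSpan_le (S : LieSubalgebra F A) [LieAlgebra.IsSimple F S]
    {N : Submodule F A} (hN : N ≤ S.toSubmodule) (h : bSpan S.toSubmodule N ≤ N) :
    N = ⊥ ∨ S.toSubmodule ≤ N := by
  let I : LieIdeal F S :=
    { N.comap S.toSubmodule.subtype with
      lie_mem := fun {x _} hm => h (lie_mem_bSpan x.2 hm) }
  rcases LieAlgebra.IsSimple.eq_bot_or_eq_top I with hI | hI
  · refine .inl (eq_bot_iff.2 fun x hx => ?_)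
    have hxI : (⟨x, hN hx⟩ : S) ∈ I := hx
    rw [hI, LieSubmodule.mem_bot] at hxI
    exact (Submodule.mem_bot F).2 (congrArg Subtype.val hxI)
  · exact .inr fun x hx => (hI ▸ LieSubmodule.mem_top _ : (⟨x, hx⟩ : S) ∈ I)

end GradedLie

namespace GradedLie

variable {F A : Type*} [Field F] [CharP F 3] [LieRing A] [LieAlgebra F A]

theorem lemma_2_14_general
    (L : ℤ → Submodule F A)
    (hdecomp : DirectSum.IsInternal L)
    (hgrade : ∀ i j : ℤ, ∀ x ∈ L i, ∀ y ∈ L j, ⁅x, y⁆ ∈ L (i + j))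
    (q : ℤ) (hq : 1 ≤ q)
    (hbot : L (-q) ≠ ⊥)
    (hB : IsIrred (L 0) (L (-1)))
    (hC : ∀ j : ℤ, 0 ≤ j → ∀ x ∈ L j, (∀ y ∈ L (-1), ⁅x, y⁆ = 0) → x = 0)
    (hgen : ∀ i : ℤ, 0 < i → L (i + 1) = bSpan (L i) (L 1))
    (S : LieSubalgebra F A)
    (hSsimple : LieAlgebra.IsSimple F S)
    (hSi : ∀ i : ℤ, i ≠ 0 → S.toSubmodule ⊓ L i = L i)
    (hL1 : L 1 ≠ ⊥) :
    ∀ x ∈ L 0, (∀ y ∈ L 1, ⁅x, y⁆ = 0) → x = 0 := by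
  replace hgrade : ∀ i j, bSpan (L i) (L j) ≤ L (i + j) := fun i j => bSpan_le_iff.2 (hgrade i j)
  suffices h : annihilator (L 0) (L 1) = ⊥ from fun x hx0 hx1 =>
    (Submodule.mem_bot F).1 (h ▸ mem_annihilator.2 ⟨hx0, hx1⟩)
  rcases bSpan_annihilator_neg_one_eq_bot_or_eq hgrade hB with h | h
  · exact eq_bot_of_bSpan_neg_one_eq_bot hC le_rfl annihilator_le h
  exfalso
  have hT := bSpan_neg_one_one_le_annihilator hgrade h
  have hL2 : L 2 = ⊥ := component_two_eq_bot hC (by simpa using hgen 1 one_pos) hT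
  have hL : ∀ j, 2 ≤ j → L j = ⊥ := fun j => component_eq_bot_of_two_le hgen hL2
  have hLS : ∀ i, i ≠ 0 → L i ≤ S.toSubmodule := fun i hi => hSi i hi ▸ inf_le_left
  have hS : bSpan S.toSubmodule S.toSubmodule ≤ S.toSubmodule :=
    bSpan_le_iff.2 fun _ hx _ hy => S.lie_mem hx hy
  have hideal : bSpan S.toSubmodule (lowerIdeal L) ≤ lowerIdeal L := by
    refine (bSpan_mono le_top le_rfl).trans ?_
    rw [← hdecomp.submodule_iSup_eq_top, bSpan_iSup_left]
    exact iSup_le (bSpan_lowerIdeal_le hgrade hT hL)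
  rcases eq_bot_or_le_of_bSpan_le S (lowerIdeal_le hLS hS) hideal with h0 | hSle
  · exact hbot (eq_bot_iff.2 (h0 ▸ (le_negPart (by omega)).trans le_sup_right))
  · exact hL1 ((hdecomp.submodule_iSupIndep 1).eq_bot_of_le
      ((hLS 1 one_ne_zero).trans (hSle.trans (lowerIdeal_le_iSup_ne_one hgrade))))

/-- Lemma 2.14: under (B), (C), generation of the positive part by `L 1`, and the
existence of a simple graded subalgebra `S` with `S ∩ L i = L i` for `i ≠ 0` and
`L 1 ≠ 0`, the annihilator of `L 1` in `L 0` is zero. -/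
theorem lemma_2_14
    [FiniteDimensional F A]
    (L : ℤ → Submodule F A)
    (hdecomp : DirectSum.IsInternal L)
    (hgrade : ∀ i j : ℤ, ∀ x ∈ L i, ∀ y ∈ L j, ⁅x, y⁆ ∈ L (i + j))
    (q r : ℤ) (hq : 1 ≤ q) (hr : 1 ≤ r)
    (hbound : ∀ i : ℤ, i < -q ∨ r < i → L i = ⊥)
    (hbot : L (-q) ≠ ⊥)
    (hB : IsIrred (L 0) (L (-1)))
    (hC : ∀ j : ℤ, 0 ≤ j → ∀ x ∈ L j, (∀ y ∈ L (-1), ⁅x, y⁆ = 0) → x = 0)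
    (hgen : ∀ i : ℤ, 0 < i → L (i + 1) = bSpan (L i) (L 1))
    (S : LieSubalgebra F A)
    (hSsimple : LieAlgebra.IsSimple F S)
    (hSgraded : S.toSubmodule = ⨆ i : ℤ, S.toSubmodule ⊓ L i)
    (hSi : ∀ i : ℤ, i ≠ 0 → S.toSubmodule ⊓ L i = L i)
    (hL1 : L 1 ≠ ⊥) :
    ∀ x ∈ L 0, (∀ y ∈ L 1, ⁅x, y⁆ = 0) → x = 0 :=
  lemma_2_14_general L hdecomp hgrade q hq hbot hB hC hgen S hSsimple hSi hL1

end GradedLie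
end

section
/- Assume condition (B) holds and that L is {1}-transitive (condition (vi)). Then every nonzero L_0-submodule V of L_{−2} satisfies [V, L_1] = L_{−1}. (Lemma 2.15.) -/
/- Graded Lie algebra setting: `F` a field of characteristic 3, `A` a
finite-dimensional Lie algebra over `F`, with a `ℤ`-grading `L : ℤ → Submodule F A`. -/

namespace GradedLie

variable {F A : Type*} [Field F] [CharP F 3] [LieRing A] [LieAlgebra F A]

/-- Lemma 2.15: under (B) and {1}-transitivity (vi), every nonzero `L 0`-submodule
`V` of `L (-2)` satisfies `[V, L 1] = L (-1)`. -/
theorem lemma_2_15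
    [FiniteDimensional F A]
    (L : ℤ → Submodule F A)
    (hdecomp : DirectSum.IsInternal L)
    (hgrade : ∀ i j : ℤ, ∀ x ∈ L i, ∀ y ∈ L j, ⁅x, y⁆ ∈ L (i + j))
    (q r : ℤ) (hq : 1 ≤ q) (hr : 1 ≤ r)
    (hbound : ∀ i : ℤ, i < -q ∨ r < i → L i = ⊥)
    (hbot : L (-q) ≠ ⊥)
    (hB : IsIrred (L 0) (L (-1)))
    (hvi : ∀ i : ℤ, 0 ≤ i → ∀ x ∈ L (-i), x ≠ 0 → ∃ y ∈ L 1, ⁅y, x⁆ ≠ 0) :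
    ∀ V : Submodule F A, V ≤ L (-2) → V ≠ ⊥ → bSpan (L 0) V ≤ V →
      bSpan V (L 1) = L (-1) := by
  intro V hVle hVne hV0
  set W := bSpan V (L 1) with hW
  -- W ≤ L (-1)
  have hWle : W ≤ L (-1) := by
    apply Submodule.span_le.mpr
    rintro z ⟨v, hv, y, hy, rfl⟩
    have := hgrade (-2) 1 v (hVle hv) y hy
    norm_num at this
    exact this
  -- W is an L0-submodule
  have hWstab : bSpan (L 0) W ≤ W := by
    apply Submodule.span_le.mpr
    rintro z ⟨u, hu, w, hw, rfl⟩
    have key : Submodule.span F {z | ∃ v ∈ V, ∃ y ∈ L 1, z = ⁅v, y⁆} ≤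
        Submodule.comap (LieAlgebra.ad F A u) W := by
      apply Submodule.span_le.mpr
      rintro z ⟨v, hv, y, hy, rfl⟩
      show ⁅u, ⁅v, y⁆⁆ ∈ W
      rw [leibniz_lie]
      apply Submodule.add_mem
      · apply Submodule.subset_span
        refine ⟨⁅u, v⁆, ?_, y, hy, rfl⟩
        exact hV0 (Submodule.subset_span ⟨u, hu, v, hv, rfl⟩)
      · apply Submodule.subset_span
        refine ⟨v, hv, ⁅u, y⁆, ?_, rfl⟩
        exact hgrade 0 1 u hu y hy
    exact key hw
  -- W ≠ ⊥
  have hWne : W ≠ ⊥ := by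
    obtain ⟨v, hv, hvne⟩ := Submodule.exists_mem_ne_zero_of_ne_bot hVne
    obtain ⟨y, hy, hyv⟩ := hvi 2 (by norm_num) v (hVle hv) hvne
    intro hbotW
    have hmem : ⁅v, y⁆ ∈ W := Submodule.subset_span ⟨v, hv, y, hy, rfl⟩
    rw [hbotW, Submodule.mem_bot] at hmem
    apply hyv
    rw [← lie_skew, hmem, neg_zero]
  rcases hB.2 W hWle hWstab with h | h
  · exact absurd h hWne
  · exact h

end GradedLie
end

section
/- Assume condition (C) holds, that L_1 is an irreducible L_0-module, and that [L_{−q}, L_1] ≠ 0. Then for every i > 0, the annihilator of L_{−q} in L_i is zero: the only x ∈ L_i with [x, L_{−q}] = 0 is x = 0. (Lemma 2.16.) -/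
-- The lemmas below hold over any field.
namespace GradedLie

variable {F A : Type*} [Field F] [LieRing A] [LieAlgebra F A]

theorem bSpan_eq_bot_iff {U V : Submodule F A} :
    bSpan U V = ⊥ ↔ ∀ u ∈ U, ∀ v ∈ V, ⁅u, v⁆ = 0 := by
  simp only [bSpan, Submodule.span_eq_bot, Set.mem_ofPred_eq]
  constructor
  · exact fun h u hu v hv => h _ ⟨u, hu, v, hv, rfl⟩
  · rintro h _ ⟨u, hu, v, hv, rfl⟩
    exact h u hu v hv

theorem lie_lie_eq_zero_of_lie_eq_zero {x y z : A} (hx : ⁅x, z⁆ = 0) (hy : ⁅y, z⁆ = 0) :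
    ⁅⁅x, y⁆, z⁆ = 0 := by
  rw [lie_lie, hx, hy, lie_zero, lie_zero, sub_zero]

def annihilatorIn (M N : Submodule F A) : Submodule F A where
  carrier := {x | x ∈ M ∧ ∀ y ∈ N, ⁅x, y⁆ = 0}
  add_mem' := fun ⟨haM, ha⟩ ⟨hbM, hb⟩ =>
    ⟨M.add_mem haM hbM, fun y hy => by rw [add_lie, ha y hy, hb y hy, add_zero]⟩
  zero_mem' := ⟨M.zero_mem, fun y _ => zero_lie y⟩
  smul_mem' := fun c _ ⟨haM, ha⟩ =>
    ⟨M.smul_mem c haM, fun y hy => by rw [smul_lie, ha y hy, smul_zero]⟩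

theorem annihilatorIn_le (M N : Submodule F A) : annihilatorIn M N ≤ M :=
  fun _ hx => hx.1

theorem bSpan_annihilatorIn_le {L0 M N : Submodule F A}
    (hM : ∀ u ∈ L0, ∀ v ∈ M, ⁅u, v⁆ ∈ M) (hN : ∀ u ∈ L0, ∀ y ∈ N, ⁅u, y⁆ ∈ N) :
    bSpan L0 (annihilatorIn M N) ≤ annihilatorIn M N := by
  rw [bSpan, Submodule.span_le]
  rintro _ ⟨u, hu, v, ⟨hvM, hv⟩, rfl⟩
  refine ⟨hM u hu v hvM, fun y hy => ?_⟩
  rw [lie_lie, hv y hy, hv _ (hN u hu y hy), lie_zero, sub_zero]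

theorem annihilatorIn_eq_bot_of_isIrred {L0 M N : Submodule F A} (hirr : IsIrred L0 M)
    (hM : ∀ u ∈ L0, ∀ v ∈ M, ⁅u, v⁆ ∈ M) (hN : ∀ u ∈ L0, ∀ y ∈ N, ⁅u, y⁆ ∈ N)
    (hNM : bSpan N M ≠ ⊥) :
    annihilatorIn M N = ⊥ := by
  refine (hirr.2 _ (annihilatorIn_le M N) (bSpan_annihilatorIn_le hM hN)).resolve_right
    fun hall => hNM ?_
  rw [bSpan_eq_bot_iff]
  intro u hu v hv
  have hv' : v ∈ annihilatorIn M N := by rwa [hall]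
  rw [← lie_skew, hv'.2 u hu, neg_zero]

def IsGraded (L : ℤ → Submodule F A) : Prop :=
  ∀ i j : ℤ, ∀ x ∈ L i, ∀ y ∈ L j, ⁅x, y⁆ ∈ L (i + j)

/-- Condition (C). -/
def IsTransitive (L : ℤ → Submodule F A) : Prop :=
  ∀ j : ℤ, 0 ≤ j → ∀ x ∈ L j, (∀ y ∈ L (-1), ⁅x, y⁆ = 0) → x = 0

theorem IsGraded.lie_mem_of_mem_zero {L : ℤ → Submodule F A} (hL : IsGraded L) (i : ℤ) :
    ∀ u ∈ L 0, ∀ v ∈ L i, ⁅u, v⁆ ∈ L i := fun u hu v hv => by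
  simpa using hL 0 i u hu v hv

theorem IsGraded.lie_mem_annihilatorIn {L : ℤ → Submodule F A} (hL : IsGraded L) {i j k : ℤ}
    (hjk : L (j + k) = ⊥) {x y : A} (hx : x ∈ annihilatorIn (L i) (L k)) (hy : y ∈ L j) :
    ⁅x, y⁆ ∈ annihilatorIn (L (i + j)) (L k) := by
  refine ⟨hL i j x hx.1 y hy, fun z hz => lie_lie_eq_zero_of_lie_eq_zero (hx.2 z hz) ?_⟩
  simpa [hjk] using hL j k y hy z hz

theorem IsTransitive.annihilatorIn_eq_bot_of_one_le {L : ℤ → Submodule F A}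
    (hC : IsTransitive L) (hL : IsGraded L) {k : ℤ} (hk : L (-1 + k) = ⊥)
    (h1 : annihilatorIn (L 1) (L k) = ⊥) {i : ℤ} (hi : 1 ≤ i) :
    annihilatorIn (L i) (L k) = ⊥ := by
  induction i, hi using Int.leInduction with
  | base => exact h1
  | succ n hn ih =>
    refine (Submodule.eq_bot_iff _).2 fun x hx => hC (n + 1) (by omega) x hx.1 fun y hy => ?_
    have hxy := hL.lie_mem_annihilatorIn hk hx hy
    rw [add_neg_cancel_right, ih] at hxy
    exact (Submodule.mem_bot F).1 hxy

end GradedLie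

namespace GradedLie

variable {F A : Type*} [Field F] [CharP F 3] [LieRing A] [LieAlgebra F A]

theorem lemma_2_16_general
    (L : ℤ → Submodule F A)
    (hgrade : ∀ i j : ℤ, ∀ x ∈ L i, ∀ y ∈ L j, ⁅x, y⁆ ∈ L (i + j))
    (q r : ℤ)
    (hbound : ∀ i : ℤ, i < -q ∨ r < i → L i = ⊥)
    (hC : ∀ j : ℤ, 0 ≤ j → ∀ x ∈ L j, (∀ y ∈ L (-1), ⁅x, y⁆ = 0) → x = 0)
    (hL1irr : IsIrred (L 0) (L 1))
    (hne : bSpan (L (-q)) (L 1) ≠ ⊥) :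
    ∀ i : ℤ, 0 < i → ∀ x ∈ L i, (∀ y ∈ L (-q), ⁅x, y⁆ = 0) → x = 0 := by
  intro i hi x hx hann
  have hL : IsGraded L := hgrade
  have h1 : annihilatorIn (L 1) (L (-q)) = ⊥ :=
    annihilatorIn_eq_bot_of_isIrred hL1irr (hL.lie_mem_of_mem_zero 1)
      (hL.lie_mem_of_mem_zero (-q)) hne
  have hi_ann : annihilatorIn (L i) (L (-q)) = ⊥ :=
    IsTransitive.annihilatorIn_eq_bot_of_one_le hC hL (hbound _ (Or.inl (by omega))) h1 hi
  have hx_ann : x ∈ annihilatorIn (L i) (L (-q)) := ⟨hx, hann⟩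
  rwa [hi_ann, Submodule.mem_bot] at hx_ann

/-- Lemma 2.16: under (C), irreducibility of `L 1`, and `[L (-q), L 1] ≠ 0`,
the annihilator of `L (-q)` in each `L i`, `i > 0`, is zero. -/
theorem lemma_2_16
    [FiniteDimensional F A]
    (L : ℤ → Submodule F A)
    (hdecomp : DirectSum.IsInternal L)
    (hgrade : ∀ i j : ℤ, ∀ x ∈ L i, ∀ y ∈ L j, ⁅x, y⁆ ∈ L (i + j))
    (q r : ℤ) (hq : 1 ≤ q) (hr : 1 ≤ r)
    (hbound : ∀ i : ℤ, i < -q ∨ r < i → L i = ⊥)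
    (hbot : L (-q) ≠ ⊥)
    (hC : ∀ j : ℤ, 0 ≤ j → ∀ x ∈ L j, (∀ y ∈ L (-1), ⁅x, y⁆ = 0) → x = 0)
    (hL1irr : IsIrred (L 0) (L 1))
    (hne : bSpan (L (-q)) (L 1) ≠ ⊥) :
    ∀ i : ℤ, 0 < i → ∀ x ∈ L i, (∀ y ∈ L (-q), ⁅x, y⁆ = 0) → x = 0 :=
  lemma_2_16_general L hgrade q r hbound hC hL1irr hne

end GradedLie
end

section
/- Assume q > 5, r ≥ q, and condition (F1); assume [L_{−q}, L_{q−2}] = L_{−2} and [L_{−q+1}, L_{q−2}] = L_{−1}; assume that for every i > 0 and every nonzero x ∈ L_i one has [x, L_{−q}] ≠ 0, and that [L_{−q}, X] ≠ 0 for every nonzero L_0-submodule X of L_0; and assume that L_{−q} and L_{−q+1} are irreducible L_0-modules. Then: if q is even, L_{−2}^{q/2} = L_{−q}, while if q is odd, L_{−2}^{(q−1)/2} = L_{−q+1}. (Lemma 2.21.) -/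
/- Graded Lie algebra setting: `F` a field of characteristic 3, `A` a
finite-dimensional Lie algebra over `F`, with a `ℤ`-grading `L : ℤ → Submodule F A`. -/

namespace GradedLie

variable {F A : Type*} [Field F] [CharP F 3] [LieRing A] [LieAlgebra F A]

/-- `lpow U k` is the left-normed `k`-fold bracket `U^k`:
`U^1 = U`, `U^(k+1) = [U, U^k]` (with the junk value `⊥` at `k = 0`). -/
def lpow (U : Submodule F A) : ℕ → Submodule F A
  | 0 => ⊥
  | 1 => U
  | (k + 2) => bSpan U (lpow U (k + 1))

lemma mem_bSpan {U V : Submodule F A} {u v : A} (hu : u ∈ U) (hv : v ∈ V) :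
    ⁅u, v⁆ ∈ bSpan U V :=
  Submodule.subset_span ⟨u, hu, v, hv, rfl⟩

lemma bSpan_le {U V W : Submodule F A}
    (h : ∀ u ∈ U, ∀ v ∈ V, ⁅u, v⁆ ∈ W) : bSpan U V ≤ W := by
  apply Submodule.span_le.2
  rintro z ⟨u, hu, v, hv, rfl⟩
  exact h u hu v hv

lemma lie_mem_of_bSpan {U V W : Submodule F A} (w : A)
    (h : ∀ u ∈ U, ∀ v ∈ V, ⁅w, ⁅u, v⁆⁆ ∈ W) {z : A} (hz : z ∈ bSpan U V) :
    ⁅w, z⁆ ∈ W := by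
  have hle : bSpan U V ≤ W.comap (LieAlgebra.ad F A w) := by
    apply Submodule.span_le.2
    rintro s ⟨u, hu, v, hv, rfl⟩
    simpa [Submodule.mem_comap, LieAlgebra.ad_apply] using h u hu v hv
  simpa [Submodule.mem_comap, LieAlgebra.ad_apply] using hle hz

lemma lie_mem_of_bSpan' {U V W : Submodule F A} (x : A)
    (h : ∀ u ∈ U, ∀ v ∈ V, ⁅⁅u, v⁆, x⁆ ∈ W) {z : A} (hz : z ∈ bSpan U V) :
    ⁅z, x⁆ ∈ W := by
  have h' : ∀ u ∈ U, ∀ v ∈ V, ⁅x, ⁅u, v⁆⁆ ∈ W := by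
    intro u hu v hv
    rw [← lie_skew]
    exact W.neg_mem (h u hu v hv)
  have := lie_mem_of_bSpan (W := W) x h' hz
  rw [← lie_skew] at this
  rw [← neg_neg ⁅z, x⁆]
  exact W.neg_mem this

lemma bSpan_mono_right {U V W : Submodule F A} (h : V ≤ W) :
    bSpan U V ≤ bSpan U W :=
  bSpan_le fun u hu v hv => mem_bSpan hu (h hv)

lemma lpow_succ (U : Submodule F A) (k : ℕ) (hk : 1 ≤ k) :
    lpow U (k + 1) = bSpan U (lpow U k) := by
  cases k with
  | zero => omega
  | succ n => rfl

/-- Lemma 2.21: if `q > 5`, `r ≥ q`, (F1) holds, `[L (-q), L (q-2)] = L (-2)`,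
`[L (-q+1), L (q-2)] = L (-1)`, every nonzero `x ∈ L i` (`i > 0`) has
`[x, L (-q)] ≠ 0`, `[L (-q), X] ≠ 0` for every nonzero `L 0`-submodule `X` of
`L 0`, and `L (-q)`, `L (-q+1)` are irreducible, then `L (-2)^(q/2) = L (-q)`
for even `q` and `L (-2)^((q-1)/2) = L (-q+1)` for odd `q`. -/
theorem lemma_2_21
    [FiniteDimensional F A]
    (L : ℤ → Submodule F A)
    (hdecomp : DirectSum.IsInternal L)
    (hgrade : ∀ i j : ℤ, ∀ x ∈ L i, ∀ y ∈ L j, ⁅x, y⁆ ∈ L (i + j))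
    (q r : ℤ) (hq : 1 ≤ q) (hr : 1 ≤ r)
    (hbound : ∀ i : ℤ, i < -q ∨ r < i → L i = ⊥)
    (hbot : L (-q) ≠ ⊥)
    (hq5 : 5 < q) (hrq : q ≤ r)
    (hF1 : ∀ i : ℤ, -q < i → ∀ x ∈ L i, x ≠ 0 → ∃ y ∈ L (-1), ⁅y, x⁆ ≠ 0)
    (h1 : bSpan (L (-q)) (L (q - 2)) = L (-2))
    (h2 : bSpan (L (-q + 1)) (L (q - 2)) = L (-1))
    (hann : ∀ i : ℤ, 0 < i → ∀ x ∈ L i, x ≠ 0 → ∃ y ∈ L (-q), ⁅x, y⁆ ≠ 0)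
    (hX : ∀ X : Submodule F A, X ≤ L 0 → X ≠ ⊥ → bSpan (L 0) X ≤ X →
      bSpan (L (-q)) X ≠ ⊥)
    (hi1 : IsIrred (L 0) (L (-q)))
    (hi2 : IsIrred (L 0) (L (-q + 1))) :
    (Even q → lpow (L (-2)) (q / 2).toNat = L (-q)) ∧
    (Odd q → lpow (L (-2)) ((q - 1) / 2).toNat = L (-q + 1)) := by
  have hLL : ∀ i j : ℤ, bSpan (L i) (L j) ≤ L (i + j) :=
    fun i j => bSpan_le fun u hu v hv => hgrade i j u hu v hv
  have hstab : ∀ i : ℤ, bSpan (L 0) (L i) ≤ L i := by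
    intro i; have := hLL 0 i; rwa [zero_add] at this
  have hstab_b : ∀ U V : Submodule F A, bSpan (L 0) U ≤ U → bSpan (L 0) V ≤ V →
      bSpan (L 0) (bSpan U V) ≤ bSpan U V := by
    intro U V hU hV
    apply bSpan_le
    intro w hw z hz
    refine lie_mem_of_bSpan w ?_ hz
    intro u hu v hv
    rw [leibniz_lie w u v]
    exact Submodule.add_mem _ (mem_bSpan (hU (mem_bSpan hw hu)) hv)
      (mem_bSpan hu (hV (mem_bSpan hw hv)))
  -- L (-2) ≠ ⊥
  obtain ⟨x1, hx1, hx1ne⟩ := (Submodule.ne_bot_iff _).1 hi2.1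
  obtain ⟨y1, hy1, hy1ne⟩ := hF1 (-q + 1) (by omega) x1 hx1 hx1ne
  have hy1ne0 : y1 ≠ 0 := fun h => hy1ne (by simp [h])
  obtain ⟨y2, hy2, hy2ne⟩ := hF1 (-1) (by omega) y1 hy1 hy1ne0
  have hm2 : L (-2) ≠ ⊥ := by
    apply (Submodule.ne_bot_iff _).2
    refine ⟨⁅y2, y1⁆, ?_, hy2ne⟩
    have := hgrade (-1) (-1) y2 hy2 y1 hy1
    norm_num at this
    exact this
  -- key annihilator lemma
  have key : ∀ j : ℤ, 2 ≤ j → j ≤ q - 2 →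
      ∀ x, x ∈ L (-j) → (∀ u ∈ L (-2), ⁅u, x⁆ = 0) → x = 0 := by
    intro j hj2 hjq
    set M : Submodule F A :=
      L (-j) ⊓ (⨅ u ∈ L (-2), LinearMap.ker (LieAlgebra.ad F A u)) with hMdef
    have hMmem : ∀ x, x ∈ M ↔ x ∈ L (-j) ∧ ∀ u ∈ L (-2), ⁅u, x⁆ = 0 := by
      intro x
      simp [hMdef, Submodule.mem_iInf, LinearMap.mem_ker, LieAlgebra.ad_apply]
    suffices hMbot : ∀ x ∈ M, x = 0 by
      intro x hx hann2; exact hMbot x ((hMmem x).2 ⟨hx, hann2⟩)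
    set X : Submodule F A := bSpan (L (q - 2)) M with hXdef
    have hXle : X ≤ L (q - 2 + -j) :=
      bSpan_le fun v hv x hx => hgrade _ _ v hv x ((hMmem x).1 hx).1
    have hXkill : ∀ u ∈ L (-q), ∀ z ∈ X, ⁅u, z⁆ = 0 := by
      intro u hu z hz
      have : ⁅u, z⁆ ∈ (⊥ : Submodule F A) := by
        refine lie_mem_of_bSpan u ?_ hz
        intro v hv x hx
        obtain ⟨hxL, hxann⟩ := (hMmem x).1 hx
        have hux : ⁅u, x⁆ = 0 := by
          have hmem := hgrade (-q) (-j) u hu x hxL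
          rw [hbound (-q + -j) (Or.inl (by omega))] at hmem
          simpa using hmem
        have huv : ⁅u, v⁆ ∈ L (-2) := by
          have := hgrade (-q) (q - 2) u hu v hv
          have e : -q + (q - 2) = (-2 : ℤ) := by ring
          rwa [e] at this
        rw [Submodule.mem_bot, leibniz_lie u v x, hux, lie_zero, add_zero]
        exact hxann _ huv
      simpa using this
    have hXbot : X = ⊥ := by
      rcases lt_or_eq_of_le hjq with hlt | heq
      · rw [Submodule.eq_bot_iff]
        intro z hz
        by_contra hzne
        obtain ⟨y, hy, hyne⟩ := hann (q - 2 + -j) (by omega) z (hXle hz) hzne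
        apply hyne
        rw [← lie_skew, hXkill y hy z hz, neg_zero]
      · by_contra hne
        have hXL0 : X ≤ L 0 := by
          have e : q - 2 + -j = 0 := by omega
          rw [e] at hXle; exact hXle
        have hMstab : bSpan (L 0) M ≤ M := by
          apply bSpan_le
          intro w hw x hx
          obtain ⟨hxL, hxann⟩ := (hMmem x).1 hx
          refine (hMmem _).2 ⟨?_, ?_⟩
          · have := hgrade 0 (-j) w hw x hxL
            rwa [zero_add] at this
          · intro u hu
            have huw : ⁅u, w⁆ ∈ L (-2) := by
              have := hgrade (-2) 0 u hu w hw
              rwa [add_zero] at this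
            rw [leibniz_lie u w x, hxann u hu, lie_zero, add_zero]
            exact hxann _ huw
        have hXstab : bSpan (L 0) X ≤ X := hstab_b _ _ (hstab (q - 2)) hMstab
        apply hX X hXL0 hne hXstab
        apply le_bot_iff.1
        apply bSpan_le
        intro u hu z hz
        rw [Submodule.mem_bot]
        exact hXkill u hu z hz
    intro x hx
    obtain ⟨hxL, hxann⟩ := (hMmem x).1 hx
    by_contra hxne
    obtain ⟨y, hy, hyne⟩ := hF1 (-j) (by omega) x hxL hxne
    apply hyne
    rw [← h2] at hy
    have : ⁅y, x⁆ ∈ (⊥ : Submodule F A) := by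
      refine lie_mem_of_bSpan' x ?_ hy
      intro u hu v hv
      have hvx : ⁅v, x⁆ = 0 := by
        have : ⁅v, x⁆ ∈ X := mem_bSpan hv hx
        rw [hXbot] at this; simpa using this
      have hux : ⁅u, x⁆ = 0 := by
        have hmem := hgrade (-q + 1) (-j) u hu x hxL
        rw [hbound (-q + 1 + -j) (Or.inl (by omega))] at hmem
        simpa using hmem
      rw [Submodule.mem_bot, lie_lie, hvx, lie_zero, hux, lie_zero, sub_zero]
    simpa using this
  -- lpow facts
  have lpow_le : ∀ k : ℕ, 1 ≤ k → lpow (L (-2)) k ≤ L (-(2 * (k : ℤ))) := by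
    intro k hk
    induction k with
    | zero => omega
    | succ n ih =>
      rcases Nat.lt_or_ge n 1 with hn | hn
      · interval_cases n
        · have e : (-(2 * ((1 : ℕ) : ℤ))) = -2 := by norm_num
          rw [e]; exact le_of_eq rfl
      · rw [lpow_succ _ n hn]
        refine le_trans (bSpan_mono_right (ih hn)) ?_
        have := hLL (-2) (-(2 * (n : ℤ)))
        have e : (-2 : ℤ) + -(2 * (n : ℤ)) = -(2 * ((n + 1 : ℕ) : ℤ)) := by
          push_cast; ring
        rwa [e] at this
  have lpow_stab : ∀ k : ℕ, 1 ≤ k → bSpan (L 0) (lpow (L (-2)) k) ≤ lpow (L (-2)) k := by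
    intro k hk
    induction k with
    | zero => omega
    | succ n ih =>
      rcases Nat.lt_or_ge n 1 with hn | hn
      · interval_cases n
        exact hstab (-2)
      · rw [lpow_succ _ n hn]
        exact hstab_b _ _ (hstab (-2)) (ih hn)
  have lpow_ne : ∀ k : ℕ, 1 ≤ k → 2 * (k : ℤ) ≤ q → lpow (L (-2)) k ≠ ⊥ := by
    intro k hk
    induction k with
    | zero => omega
    | succ n ih =>
      intro hkq hbotk
      rcases Nat.lt_or_ge n 1 with hn | hn
      · interval_cases n
        exact hm2 hbotk
      · rw [lpow_succ _ n hn] at hbotk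
        have hzero : ∀ x ∈ lpow (L (-2)) n, x = 0 := by
          intro x hx
          refine key (2 * (n : ℤ)) (by omega) (by push_cast at hkq ⊢; omega) x ?_ ?_
          · exact lpow_le n hn hx
          · intro u hu
            have : ⁅u, x⁆ ∈ bSpan (L (-2)) (lpow (L (-2)) n) := mem_bSpan hu hx
            rw [hbotk] at this; simpa using this
        apply ih hn (by push_cast at hkq ⊢; omega)
        rw [Submodule.eq_bot_iff]
        intro x hx
        exact hzero x hx
  constructor
  · intro heven
    obtain ⟨m, hm⟩ := heven
    set k := (q / 2).toNat with hk
    have hk1 : 1 ≤ k := by omega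
    have h2k : 2 * (k : ℤ) = q := by omega
    have hle : lpow (L (-2)) k ≤ L (-q) := by
      have := lpow_le k hk1
      rwa [h2k] at this
    rcases hi1.2 _ hle (lpow_stab k hk1) with h | h
    · exact absurd h (lpow_ne k hk1 (by omega))
    · exact h
  · intro hodd
    obtain ⟨m, hm⟩ := hodd
    set k := ((q - 1) / 2).toNat with hk
    have hk1 : 1 ≤ k := by omega
    have h2k : -(2 * (k : ℤ)) = -q + 1 := by omega
    have hle : lpow (L (-2)) k ≤ L (-q + 1) := by
      have := lpow_le k hk1
      rwa [h2k] at this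
    rcases hi2.2 _ hle (lpow_stab k hk1) with h | h
    · exact absurd h (lpow_ne k hk1 (by omega))
    · exact h

end GradedLie
end

section
/- Assume conditions (B) and (C) hold. If M_1 is a nonzero L_0-submodule of L_1 whose annihilator in L_0 is nonzero (i.e. there is a nonzero x ∈ L_0 with [x, M_1] = 0), then [[L_{−1}, M_1], M_1] = 0 and [M_1, M_1] = 0. (Lemma 2.28.) -/
/- Graded Lie algebra setting: `F` a field of characteristic 3, `A` a
finite-dimensional Lie algebra over `F`, with a `ℤ`-grading `L : ℤ → Submodule F A`. -/

namespace GradedLie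

variable {F A : Type*} [Field F] [CharP F 3] [LieRing A] [LieAlgebra F A]

/-- The annihilator of `M` inside `L0` (as a submodule of `A`). -/
def annMod (L0 M : Submodule F A) : Submodule F A where
  carrier := {a | a ∈ L0 ∧ ∀ m ∈ M, ⁅a, m⁆ = 0}
  add_mem' := fun ha hb => ⟨add_mem ha.1 hb.1, fun m hm => by
    rw [add_lie, ha.2 m hm, hb.2 m hm, add_zero]⟩
  zero_mem' := ⟨zero_mem _, fun m _ => zero_lie m⟩
  smul_mem' := fun c a ha => ⟨Submodule.smul_mem _ c ha.1, fun m hm => by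
    rw [smul_lie, ha.2 m hm, smul_zero]⟩

/-- `{u ∈ Lm : ⁅u, M⁆ ⊆ N}` as a submodule. -/
def stabMod (N Lm M : Submodule F A) : Submodule F A where
  carrier := {u | u ∈ Lm ∧ ∀ m ∈ M, ⁅u, m⁆ ∈ N}
  add_mem' := fun ha hb => ⟨add_mem ha.1 hb.1, fun m hm => by
    rw [add_lie]; exact add_mem (ha.2 m hm) (hb.2 m hm)⟩
  zero_mem' := ⟨zero_mem _, fun m _ => by rw [zero_lie]; exact zero_mem _⟩
  smul_mem' := fun c a ha => ⟨Submodule.smul_mem _ c ha.1, fun m hm => by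
    rw [smul_lie]; exact Submodule.smul_mem _ c (ha.2 m hm)⟩

/-- Lemma 2.28: under (B) and (C), if `M1` is a nonzero `L 0`-submodule of `L 1`
with nonzero annihilator in `L 0`, then `[[L (-1), M1], M1] = 0` and
`[M1, M1] = 0`. -/
theorem lemma_2_28
    [FiniteDimensional F A]
    (L : ℤ → Submodule F A)
    (hdecomp : DirectSum.IsInternal L)
    (hgrade : ∀ i j : ℤ, ∀ x ∈ L i, ∀ y ∈ L j, ⁅x, y⁆ ∈ L (i + j))
    (q r : ℤ) (hq : 1 ≤ q) (hr : 1 ≤ r)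
    (hbound : ∀ i : ℤ, i < -q ∨ r < i → L i = ⊥)
    (hbot : L (-q) ≠ ⊥)
    (hB : IsIrred (L 0) (L (-1)))
    (hC : ∀ j : ℤ, 0 ≤ j → ∀ x ∈ L j, (∀ y ∈ L (-1), ⁅x, y⁆ = 0) → x = 0)
    (M1 : Submodule F A) (hM1 : M1 ≤ L 1) (hMne : M1 ≠ ⊥)
    (hMstable : bSpan (L 0) M1 ≤ M1)
    (hann : ∃ x ∈ L 0, x ≠ 0 ∧ ∀ m ∈ M1, ⁅x, m⁆ = 0) :
    bSpan (bSpan (L (-1)) M1) M1 = ⊥ ∧ bSpan M1 M1 = ⊥ := by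
  obtain ⟨x, hxL0, hxne, hxann⟩ := hann
  set N : Submodule F A := annMod (L 0) M1 with hN
  have hxN : x ∈ N := ⟨hxL0, hxann⟩
  -- M1 is stable under brackets with L 0
  have hMst : ∀ a ∈ L 0, ∀ m ∈ M1, ⁅a, m⁆ ∈ M1 := fun a ha m hm =>
    hMstable (Submodule.subset_span ⟨a, ha, m, hm, rfl⟩)
  -- N is an ideal of L 0
  have hNideal : ∀ a ∈ L 0, ∀ n ∈ N, ⁅a, n⁆ ∈ N := by
    intro a ha n hn
    refine ⟨by simpa using hgrade 0 0 a ha n hn.1, fun m hm => ?_⟩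
    rw [lie_lie, hn.2 m hm, hn.2 _ (hMst a ha m hm), lie_zero, zero_sub, neg_zero]
  have hNideal' : ∀ n ∈ N, ∀ a ∈ L 0, ⁅n, a⁆ ∈ N := by
    intro n hn a ha
    rw [← lie_skew]
    exact neg_mem (hNideal a ha n hn)
  -- the submodule V = {u ∈ L (-1) : ⁅u, M1⁆ ⊆ N}
  set V : Submodule F A := stabMod N (L (-1)) M1 with hV
  have hVle : V ≤ L (-1) := fun u hu => hu.1
  have hVst : bSpan (L 0) V ≤ V := by
    rw [bSpan, Submodule.span_le]
    rintro _ ⟨a, ha, u, hu, rfl⟩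
    refine ⟨by simpa using hgrade 0 (-1) a ha u hu.1, fun m hm => ?_⟩
    rw [lie_lie]
    exact sub_mem (hNideal a ha _ (hu.2 m hm)) (hu.2 _ (hMst a ha m hm))
  -- V is nonzero: it contains ⁅x, u⁆ for all u ∈ L (-1), and some such bracket is nonzero
  have hxuV : ∀ u ∈ L (-1), ⁅x, u⁆ ∈ V := by
    intro u hu
    refine ⟨by simpa using hgrade 0 (-1) x hxL0 u hu, fun m hm => ?_⟩
    rw [lie_lie, hxann m hm, lie_zero, sub_zero]
    exact hNideal' x hxN _ (by simpa using hgrade (-1) 1 u hu m (hM1 hm))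
  have hVne : V ≠ ⊥ := by
    intro hVbot
    apply hxne
    apply hC 0 le_rfl x hxL0
    intro y hy
    have := hxuV y hy
    rw [hVbot] at this
    simpa using this
  -- irreducibility forces V = L (-1)
  have hVeq : V = L (-1) := (hB.2 V hVle hVst).resolve_left hVne
  have hfinal : ∀ u ∈ L (-1), ∀ m ∈ M1, ⁅u, m⁆ ∈ N := by
    intro u hu m hm
    have : u ∈ V := hVeq ▸ hu
    exact this.2 m hm
  constructor
  · -- ⁅⁅L (-1), M1⁆, M1⁆ = 0
    have hsub : bSpan (L (-1)) M1 ≤ N := by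
      rw [bSpan, Submodule.span_le]
      rintro _ ⟨u, hu, m, hm, rfl⟩
      exact hfinal u hu m hm
    rw [bSpan, Submodule.span_eq_bot]
    rintro _ ⟨z, hz, m', hm', rfl⟩
    exact (hsub hz).2 m' hm'
  · -- ⁅M1, M1⁆ = 0
    rw [bSpan, Submodule.span_eq_bot]
    rintro _ ⟨m, hm, m', hm', rfl⟩
    apply hC 2 (by norm_num) _ (by simpa using hgrade 1 1 m (hM1 hm) m' (hM1 hm'))
    intro v hv
    have h1 : ⁅⁅v, m'⁆, m⁆ = 0 := (hfinal v hv m' hm').2 m hm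
    have h2 : ⁅⁅v, m⁆, m'⁆ = 0 := (hfinal v hv m hm).2 m' hm'
    have hs : ⁅m', v⁆ = -⁅v, m'⁆ := (lie_skew m' v).symm
    have hs' : ⁅m, v⁆ = -⁅v, m⁆ := (lie_skew m v).symm
    rw [lie_lie, hs, hs', lie_neg, lie_neg, lie_skew, lie_skew, h1, h2, sub_zero]

end GradedLie
end

section
/- Assume F is algebraically closed, and that conditions (B), (C) and (D) hold. Let z be a nonzero element of the center of L_0 (i.e. [z, L_0] = 0). Then there is a nonzero scalar a ∈ F such that [z, v] = a·v for every v ∈ L_{−1}, and for every i ≥ 1 and every w ∈ L_{−i} one has [z, w] = (i·a)·w, where i·a means the image of the integer i in F times a. In particular, if char F = 3 and i is not divisible by 3, then z annihilates no nonzero element of L_{−i}. (Claim established in the proof of Lemma 2.315, Section 6.) -/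
/- Graded Lie algebra setting: `F` a field of characteristic 3, `A` a
finite-dimensional Lie algebra over `F`, with a `ℤ`-grading `L : ℤ → Submodule F A`. -/

namespace GradedLie

variable {F A : Type*} [Field F] [CharP F 3] [LieRing A] [LieAlgebra F A]

/-- Claim from the proof of Lemma 2.315 (Section 6): over an algebraically closed
field, under (B), (C), (D), a nonzero central element `z` of `L 0` acts on
`L (-1)` as a nonzero scalar `a`, and on each `L (-i)` (`i ≥ 1`) as the scalar
`i·a`; in particular (char `F` = 3) `z` annihilates no nonzero element of
`L (-i)` when `3 ∤ i`. -/
theorem central_element_scalar_action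
    [IsAlgClosed F]
    [FiniteDimensional F A]
    (L : ℤ → Submodule F A)
    (hdecomp : DirectSum.IsInternal L)
    (hgrade : ∀ i j : ℤ, ∀ x ∈ L i, ∀ y ∈ L j, ⁅x, y⁆ ∈ L (i + j))
    (q r : ℤ) (hq : 1 ≤ q) (hr : 1 ≤ r)
    (hbound : ∀ i : ℤ, i < -q ∨ r < i → L i = ⊥)
    (hbot : L (-q) ≠ ⊥)
    (hB : IsIrred (L 0) (L (-1)))
    (hC : ∀ j : ℤ, 0 ≤ j → ∀ x ∈ L j, (∀ y ∈ L (-1), ⁅x, y⁆ = 0) → x = 0)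
    (hD : ∀ i : ℤ, 1 < i → L (-i) = bSpan (L (-i + 1)) (L (-1)))
    (z : A) (hz : z ∈ L 0) (hzne : z ≠ 0)
    (hcentral : ∀ y ∈ L 0, ⁅z, y⁆ = 0) :
    ∃ a : F, a ≠ 0 ∧
      (∀ v ∈ L (-1), ⁅z, v⁆ = a • v) ∧
      (∀ i : ℕ, 1 ≤ i → ∀ w ∈ L (-(i : ℤ)), ⁅z, w⁆ = ((i : F) * a) • w) ∧
      (∀ i : ℕ, 1 ≤ i → ¬ (3 ∣ i) → ∀ w ∈ L (-(i : ℤ)), w ≠ 0 → ⁅z, w⁆ ≠ 0) := by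
  -- bracket with z stays in L (-1)
  have hmem : ∀ v ∈ L (-1), ⁅z, v⁆ ∈ L (-1) := fun v hv => by
    have := hgrade 0 (-1) z hz v hv
    simpa using this
  -- the endomorphism of L (-1) given by ad z
  let f : Module.End F (L (-1)) :=
    { toFun := fun v => ⟨⁅z, (v : A)⁆, hmem v v.2⟩
      map_add' := fun x y => by ext; simp
      map_smul' := fun c x => by ext; simp }
  haveI : Nontrivial (L (-1)) := Submodule.nontrivial_iff_ne_bot.mpr hB.1
  obtain ⟨a, ha⟩ := Module.End.exists_eigenvalue f
  obtain ⟨v0, hv0⟩ := ha.exists_hasEigenvector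
  -- eigenspace of ad z in L (-1), as a submodule of A
  let V : Submodule F A :=
    { carrier := {v | v ∈ L (-1) ∧ ⁅z, v⁆ = a • v}
      add_mem' := fun hx hy => ⟨(L (-1)).add_mem hx.1 hy.1, by
        rw [lie_add, hx.2, hy.2, smul_add]⟩
      zero_mem' := ⟨(L (-1)).zero_mem, by simp⟩
      smul_mem' := fun c x hx => ⟨(L (-1)).smul_mem c hx.1, by
        rw [lie_smul, hx.2, smul_comm]⟩ }
  have hVle : V ≤ L (-1) := fun v hv => hv.1
  have hVinv : bSpan (L 0) V ≤ V := by
    rw [bSpan, Submodule.span_le]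
    rintro w ⟨u, hu, v, hv, rfl⟩
    refine ⟨by simpa using hgrade 0 (-1) u hu v hv.1, ?_⟩
    rw [leibniz_lie, hcentral u hu, zero_lie, zero_add, hv.2, lie_smul]
  have hVne : V ≠ ⊥ := by
    intro h
    have hv0V : (v0 : A) ∈ V := by
      refine ⟨v0.2, ?_⟩
      have := congrArg (Subtype.val) hv0.apply_eq_smul
      simpa [f] using this
    rw [h] at hv0V
    exact hv0.2 (Subtype.ext hv0V)
  have hVeq : V = L (-1) := (hB.2 V hVle hVinv).resolve_left hVne
  have h1 : ∀ v ∈ L (-1), ⁅z, v⁆ = a • v := by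
    intro v hv
    have : v ∈ V := hVeq ▸ hv
    exact this.2
  have hane : a ≠ 0 := by
    intro h
    apply hzne
    apply hC 0 le_rfl z hz
    intro y hy
    rw [h1 y hy, h, zero_smul]
  -- main induction
  have key : ∀ i : ℕ, 1 ≤ i → ∀ w ∈ L (-(i : ℤ)), ⁅z, w⁆ = ((i : F) * a) • w := by
    intro i hi
    induction i, hi using Nat.le_induction with
    | base =>
      intro w hw
      have : w ∈ L (-1) := by simpa using hw
      rw [h1 w this]; norm_num
    | succ n hn ih =>
      intro w hw
      have hcast : (-(↑(n + 1) : ℤ)) = -(((n : ℤ) + 1)) := by push_cast; ring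
      have hD' := hD ((n : ℤ) + 1) (by omega)
      have hw' : w ∈ bSpan (L (-((n : ℤ) + 1) + 1)) (L (-1)) := by
        rw [← hD']; rw [hcast] at hw; exact hw
      have hn' : (-((n : ℤ) + 1) + 1) = -(n : ℤ) := by ring
      rw [hn'] at hw'
      rw [bSpan] at hw'
      clear hw hcast hD'
      induction hw' using Submodule.span_induction with
      | mem x hx =>
        obtain ⟨u, hu, v, hv, rfl⟩ := hx
        rw [leibniz_lie, ih u hu, h1 v hv, lie_smul, smul_lie, ← add_smul]
        congr 1
        push_cast
        ring
      | zero => simp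
      | add x y hx hy hpx hpy => rw [lie_add, hpx, hpy, smul_add]
      | smul c x hx hpx => rw [lie_smul, hpx, smul_comm]
  refine ⟨a, hane, h1, key, ?_⟩
  intro i hi h3 w hw hwne
  rw [key i hi w hw]
  have : (i : F) ≠ 0 := by
    rw [Ne, CharP.cast_eq_zero_iff F 3 i]
    exact h3
  exact smul_ne_zero (mul_ne_zero this hane) hwne

end GradedLie
end
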